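/- Let q be a prime number and l an integer with l > q and k := l mod q ≠ 0, and let B = B(q,l). Then the characteristic polynomial of the real q²×q² matrix B Bᵀ equals (X − ql)·(X − (l+q−k))^{(q−1)k}·(X − (l−k))^{(q−1)(q−k)}·X^{q−1}. Equivalently, B has a simple singular value √(ql), (q−1)k singular values equal to √(l+q−k), (q−1)(q−k) singular values equal to √(l−k), and q−1 singular values equal to 0. -/

import Mathlib

/-!
Index the rows of `B(q,l)` by the points `(i, a)` of the affine plane over `ZMod q`. Column `(j, b)`
of `B` is then the indicator of the line `a = b + i j` of slope `j`, so `B Bᵀ` is the sum over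
`j < l` of the matrices `L_j` relating two points on a common line of slope `j mod q`. Every `L_t`
is diagonalised by the additive characters `(i, a) ↦ ψ(i u + a s)` of the plane, with eigenvalue
`q` when `s t + u = 0` and `0` otherwise. Hence `B Bᵀ` has eigenvalue `q · #{j < l | s j + u = 0}`
at the character `(s, u)`: for `s = 0` this is `q l` at `u = 0` and `0` otherwise, and for `s ≠ 0`
it is `q` times the number of `j < l` in the residue class `-u / s`, that is `l + q - k` for `k`
of the classes and `l - k` for the other `q - k`, where `k = l % q`.
-/

open Matrix Polynomial

def cyclicShift (q : ℕ) : Matrix (Fin q) (Fin q) ℝ :=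
  Matrix.of fun i j => if (j : ZMod q) = (i : ZMod q) - 1 then 1 else 0

def arrayB (q l : ℕ) : Matrix (Fin q × Fin q) (Fin l × Fin q) ℝ :=
  Matrix.of fun r c => (cyclicShift q ^ ((r.1 : ℕ) * (c.1 : ℕ))) r.2 c.2

open Finset

theorem Matrix.charpoly_eq_of_mul_eq_mul {n R : Type*} [Fintype n] [DecidableEq n] [CommRing R]
    {A D U : Matrix n n R} (hU : IsUnit U) (h : A * U = U * D) : A.charpoly = D.charpoly := by
  obtain ⟨U, rfl⟩ := hU
  calc A.charpoly = (A * U * (U⁻¹ : (Matrix n n R)ˣ)).charpoly := by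
        rw [mul_assoc, U.mul_inv, mul_one]
    _ = ((U⁻¹ : (Matrix n n R)ˣ) * (A * U)).charpoly := charpoly_mul_comm _ _
    _ = D.charpoly := by rw [h, ← mul_assoc, U.inv_mul, one_mul]

def finEquivZMod (q : ℕ) [NeZero q] : Fin q ≃ ZMod q where
  toFun i := (i : ℕ)
  invFun z := ⟨z.val, z.val_lt⟩
  left_inv i := Fin.ext (ZMod.val_cast_of_lt i.isLt)
  right_inv := ZMod.natCast_zmod_val

theorem Fin.natCast_zmod_inj {q : ℕ} [NeZero q] {a b : Fin q} :
    ((a : ℕ) : ZMod q) = (b : ℕ) ↔ a = b :=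
  (finEquivZMod q).injective.eq_iff

theorem cyclicShift_pow_apply {q : ℕ} [NeZero q] (n : ℕ) (a b : Fin q) :
    (cyclicShift q ^ n) a b = if ((b : ℕ) : ZMod q) = (a : ℕ) - n then 1 else 0 := by
  induction n generalizing b with
  | zero => simp [one_apply, eq_comm, Fin.natCast_zmod_inj]
  | succ n ih =>
    rw [pow_succ, mul_apply]
    simp_rw [ih, cyclicShift, of_apply, ite_mul, one_mul, zero_mul]
    refine (Fintype.sum_equiv (finEquivZMod q) _
      (fun z => if z = (a : ℕ) - n then if ((b : ℕ) : ZMod q) = z - 1 then 1 else 0 else 0)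
      (fun _ => rfl)).trans ?_
    simp [sub_sub]

@[simp]
theorem natCast_finEquivZMod_symm {q : ℕ} [NeZero q] (z : ZMod q) :
    ((((finEquivZMod q).symm z : Fin q) : ℕ) : ZMod q) = z :=
  ZMod.natCast_zmod_val z

def sameLineMatrix (R : Type*) [Zero R] [One R] {q : ℕ} (t : ZMod q) :
    Matrix (ZMod q × ZMod q) (ZMod q × ZMod q) R :=
  of fun x y => if x.2 - x.1 * t = y.2 - y.1 * t then 1 else 0

theorem sameLineMatrix_map {R S : Type*} [NonAssocSemiring R] [NonAssocSemiring S]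
    (f : R →+* S) {q : ℕ} (t : ZMod q) :
    (sameLineMatrix R t).map f = sameLineMatrix S t := by
  ext x y
  simp [sameLineMatrix, apply_ite f]

theorem reindex_arrayB_mul_transpose {q : ℕ} [NeZero q] (l : ℕ) :
    let e := (finEquivZMod q).prodCongr (finEquivZMod q)
    reindex e e (arrayB q l * (arrayB q l)ᵀ) = ∑ j ∈ range l, sameLineMatrix ℝ (j : ZMod q) := by
  ext x y
  simp only [reindex_apply, submatrix_apply, mul_apply, Fintype.sum_prod_type, transpose_apply,
    arrayB, of_apply, cyclicShift_pow_apply, Equiv.prodCongr_symm, Equiv.prodCongr_apply,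
    Prod.map_fst, Prod.map_snd, Nat.cast_mul, natCast_finEquivZMod_symm, ite_mul, one_mul,
    zero_mul, Matrix.sum_apply, sameLineMatrix]
  rw [← Fin.sum_univ_eq_sum_range]
  refine Finset.sum_congr rfl fun j _ => ?_
  refine (Fintype.sum_equiv (finEquivZMod q) _
      (fun z => if z = x.2 - x.1 * j then if z = y.2 - y.1 * (j : ℕ) then (1 : ℝ) else 0 else 0)
      (fun _ => rfl)).trans ?_
  simp

noncomputable def charMatrix (q : ℕ) [NeZero q] : Matrix (ZMod q × ZMod q) (ZMod q × ZMod q) ℂ :=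
  of fun x y => ZMod.stdAddChar (x.1 * y.2 + x.2 * y.1)

section Characters

variable {q : ℕ} [NeZero q]

theorem sum_stdAddChar_mul (b : ZMod q) :
    ∑ x : ZMod q, ZMod.stdAddChar (x * b) = if b = 0 then (q : ℂ) else 0 := by
  simpa using AddChar.sum_mulShift b (ZMod.isPrimitive_stdAddChar q)

theorem sum_stdAddChar_pairing (x z : ZMod q × ZMod q) :
    ∑ y : ZMod q × ZMod q, ZMod.stdAddChar (x.1 * y.2 + x.2 * y.1) *
      ZMod.stdAddChar (-(y.1 * z.2 + y.2 * z.1)) = if x = z then (q : ℂ) ^ 2 else 0 := by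
  have key : ∀ y : ZMod q × ZMod q, ZMod.stdAddChar (x.1 * y.2 + x.2 * y.1) *
      ZMod.stdAddChar (-(y.1 * z.2 + y.2 * z.1)) =
      ZMod.stdAddChar (y.1 * (x.2 - z.2)) * ZMod.stdAddChar (y.2 * (x.1 - z.1)) := fun y => by
    rw [← AddChar.map_add_eq_mul, ← AddChar.map_add_eq_mul]
    ring_nf
  simp only [key, Fintype.sum_prod_type, ← Finset.sum_mul_sum, sum_stdAddChar_mul, sub_eq_zero,
    Prod.ext_iff]
  split_ifs <;> simp_all [sq]

theorem isUnit_charMatrix : IsUnit (charMatrix q) := by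
  refine IsUnit.of_mul_eq_one
    (((q : ℂ) ^ 2)⁻¹ • of fun x y => ZMod.stdAddChar (-(x.1 * y.2 + x.2 * y.1))) ?_
  have hq : (q : ℂ) ≠ 0 := Nat.cast_ne_zero.mpr (NeZero.ne q)
  ext x z
  rw [Matrix.mul_smul, Matrix.smul_apply, mul_apply]
  simp only [charMatrix, of_apply, sum_stdAddChar_pairing, one_apply, smul_eq_mul]
  split_ifs <;> simp [hq]

theorem sameLineMatrix_mul_charMatrix (t : ZMod q) :
    sameLineMatrix ℂ t * charMatrix q =
      charMatrix q * diagonal fun y => if y.1 * t + y.2 = 0 then (q : ℂ) else 0 := by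
  ext x y
  have hline : ∀ s u : ZMod q, x.2 - x.1 * t = u - s * t ↔ u = x.2 + (s - x.1) * t :=
    fun s u => by constructor <;> intro h <;> linear_combination -h
  have hsplit : ∀ s : ZMod q, ZMod.stdAddChar (s * y.2 + (x.2 + (s - x.1) * t) * y.1) =
      ZMod.stdAddChar ((x.2 - x.1 * t) * y.1) * ZMod.stdAddChar (s * (y.1 * t + y.2)) := fun s => by
    rw [← AddChar.map_add_eq_mul]
    ring_nf
  rw [mul_diagonal, mul_apply, Fintype.sum_prod_type]
  simp only [sameLineMatrix, charMatrix, of_apply, hline, ite_mul, one_mul, zero_mul,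
    Fintype.sum_ite_eq', hsplit, ← Finset.mul_sum, sum_stdAddChar_mul]
  split_ifs with h
  · rw [eq_neg_of_add_eq_zero_right h]
    ring_nf
  · simp only [mul_zero]

end Characters

def rootCount (q l : ℕ) (y : ZMod q × ZMod q) : ℕ :=
  #{j ∈ range l | y.1 * ((j : ℕ) : ZMod q) + y.2 = 0}

theorem charpoly_sum_sameLineMatrix {q : ℕ} [NeZero q] (l : ℕ) :
    (∑ j ∈ range l, sameLineMatrix ℂ (j : ZMod q)).charpoly =
      ∏ y, (X - C ((q * rootCount q l y : ℕ) : ℂ)) := by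
  have h : (∑ j ∈ range l, sameLineMatrix ℂ (j : ZMod q)) * charMatrix q =
      charMatrix q * diagonal fun y => ((q * rootCount q l y : ℕ) : ℂ) := by
    simp only [Finset.sum_mul, sameLineMatrix_mul_charMatrix, ← Finset.mul_sum]
    congr 1
    ext x y
    by_cases hxy : x = y
    · simp [hxy, Matrix.sum_apply, rootCount, Finset.sum_ite, mul_comm]
    · simp [hxy, Matrix.sum_apply]
  rw [charpoly_eq_of_mul_eq_mul isUnit_charMatrix h, charpoly_diagonal]

section Counting

variable {q : ℕ}

theorem rootCount_zero_left (l : ℕ) (u : ZMod q) :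
    rootCount q l (0, u) = if u = 0 then l else 0 := by
  by_cases hu : u = 0 <;> simp [rootCount, hu]

theorem card_filter_natCast_eq [NeZero q] (l : ℕ) (t : ZMod q) :
    #{j ∈ range l | ((j : ℕ) : ZMod q) = t} = l / q + if t.val < l % q then 1 else 0 := by
  have hmod : ∀ j : ℕ, (j : ZMod q) = t ↔ j ≡ t.val [MOD q] := fun j => by
    rw [← ZMod.natCast_eq_natCast_iff, ZMod.natCast_zmod_val]
  simp_rw [hmod, ← Nat.count_eq_card_filter_range, Nat.count_modEq_card _ (NeZero.pos q),
    Nat.mod_eq_of_lt t.val_lt]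

theorem rootCount_of_ne_zero [Fact q.Prime] (l : ℕ) {s : ZMod q} (hs : s ≠ 0) (u : ZMod q) :
    rootCount q l (s, u) = l / q + if (-u / s).val < l % q then 1 else 0 := by
  have hroot : ∀ j : ZMod q, s * j + u = 0 ↔ j = -u / s := fun j => by
    rw [eq_div_iff hs, mul_comm, add_eq_zero_iff_eq_neg]
  simp only [rootCount, hroot, card_filter_natCast_eq]

theorem prod_ite_val_lt {M : Type*} [CommMonoid M] [NeZero q] {k : ℕ} (hk : k ≤ q) (a b : M) :
    ∏ t : ZMod q, (if t.val < k then a else b) = a ^ k * b ^ (q - k) := by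
  rw [← (finEquivZMod q).prod_comp]
  have hval : ∀ i : Fin q, (finEquivZMod q i).val = i := fun i => ZMod.val_cast_of_lt i.isLt
  have hlt : #{i : Fin q | (i : ℕ) < k} = k := by rw [Fin.card_filter_val_lt, min_eq_right hk]
  have hge : #{i : Fin q | ¬(i : ℕ) < k} = q - k := by
    have := Finset.card_filter_add_card_filter_not (s := univ) (fun i : Fin q => (i : ℕ) < k)
    rw [card_univ, Fintype.card_fin, hlt] at this
    omega
  simp only [hval, Finset.prod_ite, Finset.prod_const, hlt, hge]

end Counting

theorem prod_X_sub_rootCount {q : ℕ} [Fact q.Prime] (l : ℕ) :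
    ∏ y : ZMod q × ZMod q, (X - C ((q * rootCount q l y : ℕ) : ℝ)) =
      (X - C ((q : ℝ) * l)) *
        (X - C ((l : ℝ) + (q : ℝ) - (l % q : ℕ))) ^ ((q - 1) * (l % q)) *
        (X - C ((l : ℝ) - (l % q : ℕ))) ^ ((q - 1) * (q - l % q)) *
        X ^ (q - 1) := by
  have hcompl : #({0}ᶜ : Finset (ZMod q)) = q - 1 := by
    rw [card_compl, card_singleton, ZMod.card]
  have hdiv : (q : ℝ) * (l / q : ℕ) + (l % q : ℕ) = l := by exact_mod_cast Nat.div_add_mod l q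
  have hcast : ∀ c : Prop, [Decidable c] → ((q * (l / q + if c then 1 else 0) : ℕ) : ℝ) =
      if c then (l : ℝ) + q - (l % q : ℕ) else (l : ℝ) - (l % q : ℕ) := fun c _ => by
    split_ifs <;> push_cast <;> linarith
  have hzero : ∏ u : ZMod q, (X - C ((q * rootCount q l (0, u) : ℕ) : ℝ)) =
      (X - C ((q : ℝ) * l)) * X ^ (q - 1) := by
    rw [Fintype.prod_eq_mul_prod_compl 0, Finset.prod_congr rfl fun u hu => by
      rw [rootCount_zero_left, if_neg (by simpa using hu)]]
    simp [rootCount_zero_left, hcompl]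
  have hunit : ∀ s : ZMod q, s ≠ 0 →
      ∏ u : ZMod q, (X - C ((q * rootCount q l (s, u) : ℕ) : ℝ)) =
      (X - C ((l : ℝ) + (q : ℝ) - (l % q : ℕ))) ^ (l % q) *
        (X - C ((l : ℝ) - (l % q : ℕ))) ^ (q - l % q) := fun s hs => by
    rw [← ((Equiv.mulLeft₀ s hs).trans (Equiv.neg _)).prod_comp]
    have ht : ∀ t : ZMod q, -(-(s * t)) / s = t := fun t => by field_simp
    simp only [Equiv.trans_apply, Equiv.mulLeft₀_apply, Equiv.neg_apply,
      rootCount_of_ne_zero l hs, ht, hcast, apply_ite (fun x : ℝ => X - C x)]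
    exact prod_ite_val_lt (Nat.mod_lt l (Fact.out : q.Prime).pos).le _ _
  rw [Fintype.prod_prod_type, Fintype.prod_eq_mul_prod_compl 0, hzero,
    Finset.prod_congr rfl fun s hs => hunit s (by simpa using hs), prod_const, hcompl]
  ring

theorem arrayB_charpoly_of_not_dvd_general (q l : ℕ) (hq : q.Prime) :
    (arrayB q l * (arrayB q l)ᵀ).charpoly =
      (X - C ((q : ℝ) * l)) *
        (X - C ((l : ℝ) + (q : ℝ) - (l % q : ℕ))) ^ ((q - 1) * (l % q)) *
        (X - C ((l : ℝ) - (l % q : ℕ))) ^ ((q - 1) * (q - l % q)) *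
        X ^ (q - 1) := by
  have : Fact q.Prime := ⟨hq⟩
  let e := (finEquivZMod q).prodCongr (finEquivZMod q)
  have hgram : reindex e e ((arrayB q l * (arrayB q l)ᵀ).map (algebraMap ℝ ℂ)) =
      ∑ j ∈ range l, sameLineMatrix ℂ (j : ZMod q) := by
    rw [reindex_apply, submatrix_map, ← reindex_apply, reindex_arrayB_mul_transpose,
      ← RingHom.mapMatrix_apply, map_sum]
    simp only [RingHom.mapMatrix_apply, sameLineMatrix_map]
  rw [← prod_X_sub_rootCount]
  apply Polynomial.map_injective (algebraMap ℝ ℂ) (FaithfulSMul.algebraMap_injective ℝ ℂ)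
  rw [← charpoly_map, ← charpoly_reindex e, hgram, charpoly_sum_sameLineMatrix,
    Polynomial.map_prod]
  simp

theorem arrayB_charpoly_of_not_dvd (q l : ℕ) (hq : q.Prime) (hql : q < l)
    (hk : l % q ≠ 0) :
    (arrayB q l * (arrayB q l)ᵀ).charpoly =
      (X - C ((q : ℝ) * l)) *
        (X - C ((l : ℝ) + (q : ℝ) - (l % q : ℕ))) ^ ((q - 1) * (l % q)) *
        (X - C ((l : ℝ) - (l % q : ℕ))) ^ ((q - 1) * (q - l % q)) *
        X ^ (q - 1) :=
  arrayB_charpoly_of_not_dvd_general q l hq
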